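/- Let X ∈ ℝ^{I₁×I₂}, σ > 0, and r = min(I₁, I₂). Then min over Y of (‖X − Y‖_F² + 2σ‖Y‖_*) equals min over A₁ ∈ ℝ^{I₁×r}, A₂ ∈ ℝ^{I₂×r} of (‖X − A₁A₂ᵀ‖_F² + σ(‖A₁‖_F² + ‖A₂‖_F²)). Moreover, if (Â₁, Â₂) solves the right-hand problem, then Ŷ = Â₁Â₂ᵀ solves the left-hand problem. -/

import Mathlib

open Matrix

/-- The nuclear norm of a real matrix: sum of its singular values,
i.e. the square roots of the eigenvalues of `Xᴴ * X`. -/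
noncomputable def nuclearNorm {m n : ℕ} (X : Matrix (Fin m) (Fin n) ℝ) : ℝ :=
  ∑ i, Real.sqrt ((Matrix.isHermitian_conjTranspose_mul_self X).eigenvalues i)

/-- Squared Frobenius norm. -/
def frobSq {m n : ℕ} (X : Matrix (Fin m) (Fin n) ℝ) : ℝ :=
  ∑ i, ∑ j, (X i j) ^ 2

/-!
For a factorization `M = A₁ A₂ᵀ` with right singular vectors `vⱼ` and left singular vectors
`uⱼ = M vⱼ / sⱼ`, each singular value is `sⱼ = uⱼᵀ M vⱼ = ⟨A₁ᵀ uⱼ, A₂ᵀ vⱼ⟩`, which is at most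
`(‖A₁ᵀ uⱼ‖² + ‖A₂ᵀ vⱼ‖²) / 2`; Bessel's inequality sums this to `2 ‖M‖_* ≤ ‖A₁‖_F² + ‖A₂‖_F²`.
Conversely, for an SVD `Y = W Σ Vᵀ` the balanced factorization `A₁ = W Σ^{1/2}`, `A₂ = V Σ^{1/2}`
attains equality and has only `rank Y ≤ min I₁ I₂` nonzero columns. So every value of the factored
objective dominates the nuclear-norm objective at `A₁ A₂ᵀ`, and every value of the latter is a
value of the former.
-/

section Frobenius

variable {m n r : ℕ}

lemma frobSq_eq_trace (A : Matrix (Fin m) (Fin n) ℝ) : frobSq A = trace (Aᵀ * A) := by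
  simp only [frobSq, trace, diag, mul_apply, transpose_apply, sq]
  exact Finset.sum_comm

lemma frobSq_transpose (A : Matrix (Fin m) (Fin n) ℝ) : frobSq Aᵀ = frobSq A :=
  Finset.sum_comm

lemma frobSq_eq_trace_mul_transpose (A : Matrix (Fin m) (Fin n) ℝ) :
    frobSq A = trace (A * Aᵀ) := by
  rw [← frobSq_transpose, frobSq_eq_trace, transpose_transpose]

lemma frobSq_nonneg (A : Matrix (Fin m) (Fin n) ℝ) : 0 ≤ frobSq A := by
  unfold frobSq; positivity

lemma two_mul_trace_transpose_mul_le (A B : Matrix (Fin m) (Fin n) ℝ) :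
    2 * trace (Aᵀ * B) ≤ frobSq A + frobSq B := by
  have h := frobSq_nonneg (A - B)
  simp only [frobSq_eq_trace] at h ⊢
  have hBA : trace (Bᵀ * A) = trace (Aᵀ * B) := by
    rw [← trace_transpose, transpose_mul, transpose_transpose]
  simp only [transpose_sub, Matrix.sub_mul, Matrix.mul_sub, trace_sub] at h
  linarith

lemma frobSq_transpose_mul_le {V : Matrix (Fin m) (Fin n) ℝ} (hV : V * (Vᵀ * V) = V)
    (A : Matrix (Fin m) (Fin r) ℝ) : frobSq (Vᵀ * A) ≤ frobSq A := by
  -- `V` is a partial isometry, so `Q` is an orthogonal projection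
  set Q := 1 - V * Vᵀ
  have hVV : V * Vᵀ * (V * Vᵀ) = V * Vᵀ := by
    rw [Matrix.mul_assoc, ← Matrix.mul_assoc Vᵀ, ← Matrix.mul_assoc, hV]
  have hQ : Qᵀ * Q = Q := by
    simp only [Q, transpose_sub, transpose_one, transpose_mul, transpose_transpose, sub_mul,
      mul_sub, one_mul, mul_one, hVV]
    abel
  have hQA : (Q * A)ᵀ * (Q * A) = Aᵀ * A - (Vᵀ * A)ᵀ * (Vᵀ * A) := by
    rw [transpose_mul, Matrix.mul_assoc, ← Matrix.mul_assoc Qᵀ, hQ]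
    simp [Q, Matrix.sub_mul, Matrix.mul_sub, Matrix.mul_assoc]
  have h := frobSq_nonneg (Q * A)
  simp only [frobSq_eq_trace, hQA, trace_sub] at h ⊢
  linarith

end Frobenius

section SingularValues

variable {m n : ℕ} (M : Matrix (Fin m) (Fin n) ℝ)

noncomputable def rightSingularVectors : Matrix (Fin n) (Fin n) ℝ :=
  (isHermitian_conjTranspose_mul_self M).eigenvectorUnitary

noncomputable def singularValues (j : Fin n) : ℝ :=
  √((isHermitian_conjTranspose_mul_self M).eigenvalues j)

lemma nuclearNorm_eq_sum_singularValues : nuclearNorm M = ∑ j, singularValues M j := rfl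

lemma singularValues_nonneg (j : Fin n) : 0 ≤ singularValues M j := Real.sqrt_nonneg _

lemma rightSingularVectors_mul_transpose :
    rightSingularVectors M * (rightSingularVectors M)ᵀ = 1 := by
  rw [← conjTranspose_eq_transpose_of_trivial, ← star_eq_conjTranspose]
  exact Unitary.coe_mul_star_self _

lemma transpose_rightSingularVectors_mul :
    (rightSingularVectors M)ᵀ * rightSingularVectors M = 1 := by
  rw [← conjTranspose_eq_transpose_of_trivial, ← star_eq_conjTranspose]
  exact Unitary.coe_star_mul_self _

lemma transpose_mul_self_mul_rightSingularVectors :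
    (M * rightSingularVectors M)ᵀ * (M * rightSingularVectors M) =
      diagonal fun j => singularValues M j ^ 2 := by
  have h := (isHermitian_conjTranspose_mul_self M).conjStarAlgAut_star_eigenvectorUnitary
  rw [Unitary.conjStarAlgAut_star_apply] at h
  simp only [singularValues, Real.sq_sqrt (eigenvalues_conjTranspose_mul_self_nonneg M _)]
  rw [star_eq_conjTranspose, conjTranspose_eq_transpose_of_trivial] at h
  rw [transpose_mul, Matrix.mul_assoc, ← Matrix.mul_assoc Mᵀ, ← Matrix.mul_assoc,
    ← conjTranspose_eq_transpose_of_trivial M]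
  exact h

lemma card_singularValues_ne_zero : Fintype.card {j // singularValues M j ≠ 0} = M.rank := by
  rw [← rank_conjTranspose_mul_self,
    (isHermitian_conjTranspose_mul_self M).rank_eq_card_non_zero_eigs]
  simp only [singularValues, ne_eq,
    Real.sqrt_eq_zero (eigenvalues_conjTranspose_mul_self_nonneg M _)]

end SingularValues

lemma mul_diagonal_support_eq_self {m n : ℕ} {W : Matrix (Fin m) (Fin n) ℝ} {s : Fin n → ℝ}
    (hW : Wᵀ * W = diagonal fun j => s j ^ 2) :
    W * diagonal (fun j => if s j ≠ 0 then (1 : ℝ) else 0) = W := by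
  ext i j
  rw [mul_diagonal]
  split_ifs with hs
  · rw [mul_one]
  · have hcol : ∑ k, W k j * W k j = 0 := by
      simpa [mul_apply, not_not.mp hs] using congrFun (congrFun hW j) j
    have := (Finset.sum_eq_zero_iff_of_nonneg fun k _ => mul_self_nonneg (W k j)).mp hcol i
      (Finset.mem_univ i)
    simpa using (mul_self_eq_zero.mp this).symm

lemma exists_mul_transpose_eq_diagonal {ι R : Type*} [Fintype ι] [DecidableEq ι] [Semiring R]
    (p : ι → Prop) [DecidablePred p] {r : ℕ} (hp : Fintype.card {i // p i} ≤ r) :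
    ∃ P : Matrix ι (Fin r) R, P * Pᵀ = diagonal fun i => if p i then 1 else 0 := by
  obtain ⟨e⟩ := Function.Embedding.nonempty_of_card_le (hp.trans (Fintype.card_fin r).ge)
  refine ⟨of fun i c => if h : p i then (if e ⟨i, h⟩ = c then 1 else 0) else 0, ?_⟩
  ext i j
  by_cases hi : p i <;> by_cases hj : p j <;>
    simp [mul_apply, hi, hj, diagonal_apply, e.injective.eq_iff]
  rintro rfl
  exact absurd hi hj

lemma frobSq_mul_diagonal_mul {m n r : ℕ} (W : Matrix (Fin m) (Fin n) ℝ) (f g : Fin n → ℝ)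
    {P : Matrix (Fin n) (Fin r) ℝ} (hP : P * Pᵀ = diagonal g) :
    frobSq (W * diagonal f * P) = ∑ j, f j ^ 2 * g j * (Wᵀ * W) j j := by
  simp only [frobSq_eq_trace_mul_transpose, transpose_mul, diagonal_transpose, Matrix.mul_assoc]
  rw [← Matrix.mul_assoc P, hP, ← Matrix.mul_assoc (diagonal g), diagonal_mul_diagonal,
    ← Matrix.mul_assoc (diagonal f), diagonal_mul_diagonal, trace_mul_comm, Matrix.mul_assoc]
  simp only [trace, diag, diagonal_mul]
  exact Finset.sum_congr rfl fun j _ => by ring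

lemma two_mul_nuclearNorm_mul_transpose_le {m n r : ℕ} (A₁ : Matrix (Fin m) (Fin r) ℝ)
    (A₂ : Matrix (Fin n) (Fin r) ℝ) :
    2 * nuclearNorm (A₁ * A₂ᵀ) ≤ frobSq A₁ + frobSq A₂ := by
  set M := A₁ * A₂ᵀ
  set U := rightSingularVectors M
  set s := singularValues M
  have hW : (M * U)ᵀ * (M * U) = diagonal fun j => s j ^ 2 :=
    transpose_mul_self_mul_rightSingularVectors M
  -- the columns of `V` are the left singular vectors `M vⱼ / sⱼ`, or `0` where `sⱼ = 0`
  set V := M * U * diagonal fun j => (s j)⁻¹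
  have hVtV : Vᵀ * V = diagonal fun j => (s j)⁻¹ * (s j ^ 2 * (s j)⁻¹) := by
    rw [transpose_mul, diagonal_transpose, Matrix.mul_assoc, ← Matrix.mul_assoc (M * U)ᵀ, hW,
      diagonal_mul_diagonal, diagonal_mul_diagonal]
  have hV : V * (Vᵀ * V) = V := by
    rw [hVtV, Matrix.mul_assoc, diagonal_mul_diagonal]
    congr 2
    ext j
    by_cases hs : s j = 0
    · simp [hs]
    · field_simp
  have hU : U * (Uᵀ * U) = U := by rw [transpose_rightSingularVectors_mul, Matrix.mul_one]
  have hnuc : nuclearNorm M = trace ((A₁ᵀ * V)ᵀ * (A₂ᵀ * U)) := by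
    rw [transpose_mul A₁ᵀ, transpose_transpose, Matrix.mul_assoc, ← Matrix.mul_assoc A₁,
      transpose_mul (M * U), diagonal_transpose, Matrix.mul_assoc, hW, diagonal_mul_diagonal,
      trace_diagonal, nuclearNorm_eq_sum_singularValues]
    simp [s, sq, ← mul_assoc]
  calc 2 * nuclearNorm M = 2 * trace ((A₁ᵀ * V)ᵀ * (A₂ᵀ * U)) := by rw [hnuc]
    _ ≤ frobSq (A₁ᵀ * V) + frobSq (A₂ᵀ * U) := two_mul_trace_transpose_mul_le _ _
    _ = frobSq (Vᵀ * A₁) + frobSq (Uᵀ * A₂) := by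
      rw [← frobSq_transpose (A₁ᵀ * V), ← frobSq_transpose (A₂ᵀ * U), transpose_mul A₁ᵀ,
        transpose_mul A₂ᵀ, transpose_transpose, transpose_transpose]
    _ ≤ frobSq A₁ + frobSq A₂ :=
      add_le_add (frobSq_transpose_mul_le hV A₁) (frobSq_transpose_mul_le hU A₂)

lemma exists_mul_transpose_eq_of_rank_le {m n r : ℕ} (Y : Matrix (Fin m) (Fin n) ℝ)
    (hr : Y.rank ≤ r) :
    ∃ (A₁ : Matrix (Fin m) (Fin r) ℝ) (A₂ : Matrix (Fin n) (Fin r) ℝ),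
      A₁ * A₂ᵀ = Y ∧ frobSq A₁ + frobSq A₂ = 2 * nuclearNorm Y := by
  rw [nuclearNorm_eq_sum_singularValues]
  set U := rightSingularVectors Y
  set s := singularValues Y
  have hs : ∀ j, 0 ≤ s j := singularValues_nonneg Y
  have hW : (Y * U)ᵀ * (Y * U) = diagonal fun j => s j ^ 2 :=
    transpose_mul_self_mul_rightSingularVectors Y
  -- `P` packs the at most `r` columns with `sⱼ ≠ 0` into `Fin r`
  obtain ⟨P, hP⟩ := exists_mul_transpose_eq_diagonal (R := ℝ) (fun j => s j ≠ 0)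
    ((card_singularValues_ne_zero Y).trans_le hr)
  set d : Fin n → ℝ := fun j => √(s j)
  have hd : (fun j => (d j)⁻¹ * ((if s j ≠ 0 then 1 else 0) * d j)) =
      fun j => if s j ≠ 0 then 1 else 0 := by
    ext j
    by_cases h0 : s j = 0
    · simp [h0]
    · have : d j ≠ 0 := by simp [d, Real.sqrt_eq_zero (hs j), h0]
      field_simp [h0]
  refine ⟨Y * U * diagonal (fun j => (d j)⁻¹) * P, U * diagonal d * P, ?_, ?_⟩
  · calc Y * U * diagonal (fun j => (d j)⁻¹) * P * (U * diagonal d * P)ᵀ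
        = Y * U * diagonal (fun j => (d j)⁻¹ * ((if s j ≠ 0 then 1 else 0) * d j)) * Uᵀ := by
          simp only [transpose_mul, diagonal_transpose, Matrix.mul_assoc]
          rw [← Matrix.mul_assoc P, hP, ← Matrix.mul_assoc (diagonal _) (diagonal d),
            diagonal_mul_diagonal, ← Matrix.mul_assoc (diagonal _), diagonal_mul_diagonal]
      _ = Y * U * Uᵀ := by rw [hd, mul_diagonal_support_eq_self hW]
      _ = Y := by rw [Matrix.mul_assoc, rightSingularVectors_mul_transpose, Matrix.mul_one]
  · rw [frobSq_mul_diagonal_mul _ _ _ hP, frobSq_mul_diagonal_mul _ _ _ hP, hW,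
      transpose_rightSingularVectors_mul, Finset.mul_sum, ← Finset.sum_add_distrib]
    refine Finset.sum_congr rfl fun j _ => ?_
    by_cases h0 : s j = 0
    · simp [h0]
    · simp only [if_pos h0, diagonal_apply_eq, one_apply_eq, mul_one, inv_pow, d,
        Real.sq_sqrt (hs j)]
      rw [sq, ← mul_assoc, inv_mul_mul_self]
      ring

theorem stmt5 {I₁ I₂ : ℕ} (X : Matrix (Fin I₁) (Fin I₂) ℝ) (σ : ℝ) (hσ : 0 < σ) :
    sInf {v : ℝ | ∃ Y : Matrix (Fin I₁) (Fin I₂) ℝ,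
        v = frobSq (X - Y) + 2 * σ * nuclearNorm Y} =
      sInf {v : ℝ | ∃ (A₁ : Matrix (Fin I₁) (Fin (min I₁ I₂)) ℝ)
          (A₂ : Matrix (Fin I₂) (Fin (min I₁ I₂)) ℝ),
          v = frobSq (X - A₁ * A₂ᵀ) + σ * (frobSq A₁ + frobSq A₂)} ∧
    ∀ (Ah₁ : Matrix (Fin I₁) (Fin (min I₁ I₂)) ℝ) (Ah₂ : Matrix (Fin I₂) (Fin (min I₁ I₂)) ℝ),
      (∀ (A₁ : Matrix (Fin I₁) (Fin (min I₁ I₂)) ℝ) (A₂ : Matrix (Fin I₂) (Fin (min I₁ I₂)) ℝ),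
        frobSq (X - Ah₁ * Ah₂ᵀ) + σ * (frobSq Ah₁ + frobSq Ah₂) ≤
          frobSq (X - A₁ * A₂ᵀ) + σ * (frobSq A₁ + frobSq A₂)) →
      ∀ Y : Matrix (Fin I₁) (Fin I₂) ℝ,
        frobSq (X - Ah₁ * Ah₂ᵀ) + 2 * σ * nuclearNorm (Ah₁ * Ah₂ᵀ) ≤
          frobSq (X - Y) + 2 * σ * nuclearNorm Y := by
  have hle (A₁ : Matrix (Fin I₁) (Fin (min I₁ I₂)) ℝ) (A₂ : Matrix (Fin I₂) (Fin (min I₁ I₂)) ℝ) :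
      frobSq (X - A₁ * A₂ᵀ) + 2 * σ * nuclearNorm (A₁ * A₂ᵀ) ≤
        frobSq (X - A₁ * A₂ᵀ) + σ * (frobSq A₁ + frobSq A₂) := by
    have := mul_le_mul_of_nonneg_left (two_mul_nuclearNorm_mul_transpose_le A₁ A₂) hσ.le
    linarith
  have hfactor (Y : Matrix (Fin I₁) (Fin I₂) ℝ) : ∃ (A₁ : Matrix (Fin I₁) (Fin (min I₁ I₂)) ℝ)
      (A₂ : Matrix (Fin I₂) (Fin (min I₁ I₂)) ℝ),
      frobSq (X - A₁ * A₂ᵀ) + σ * (frobSq A₁ + frobSq A₂) =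
        frobSq (X - Y) + 2 * σ * nuclearNorm Y := by
    obtain ⟨A₁, A₂, hY, hnorm⟩ :=
      exists_mul_transpose_eq_of_rank_le Y (le_min Y.rank_le_height Y.rank_le_width)
    exact ⟨A₁, A₂, by rw [hY, hnorm]; ring⟩
  refine ⟨csInf_eq_csInf_of_forall_exists_le ?_ ?_, ?_⟩
  · rintro _ ⟨Y, rfl⟩
    obtain ⟨A₁, A₂, h⟩ := hfactor Y
    exact ⟨_, ⟨A₁, A₂, rfl⟩, h.le⟩
  · rintro _ ⟨A₁, A₂, rfl⟩
    exact ⟨_, ⟨A₁ * A₂ᵀ, rfl⟩, hle A₁ A₂⟩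
  · intro Ah₁ Ah₂ hmin Y
    obtain ⟨A₁, A₂, h⟩ := hfactor Y
    exact (hle Ah₁ Ah₂).trans ((hmin A₁ A₂).trans h.le)
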